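/- arXiv:2209.13381 — 4 statements merged into one kernel-verified Lean document; each statement's English description precedes it below -/
import Mathlib

section
/- Let 𝒞 be the recollement of 𝒞₀ and 𝒞₁ with inclusions i₀, i₁ and localizations L₀, L₁. Then the square consisting of 𝒞, the arrow category Fun(Δ¹, 𝒞₀), 𝒞₁, and 𝒞₀—where 𝒞 → 𝒞₁ is L₁, 𝒞 → Fun(Δ¹, 𝒞₀) is the functor sp̄ classifying the natural transformation L₀ → L₀ ∘ i₁ ∘ L₁, Fun(Δ¹, 𝒞₀) → 𝒞₀ is evaluation at 1, and 𝒞₁ → 𝒞₀ is L₀ ∘ i₁—is a Cartesian square of ∞-categories; i.e. 𝒞 ≃ Fun(Δ¹, 𝒞₀) ×_{𝒞₀} 𝒞₁. -/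
/-!
STATEMENT 3: For a recollement 𝒞 of (𝒞₀, 𝒞₁), the square with vertices 𝒞, Fun(Δ¹, 𝒞₀)
(the arrow category), 𝒞₁ and 𝒞₀ — with 𝒞 → 𝒞₁ given by L₁, 𝒞 → Fun(Δ¹, 𝒞₀) given by the
functor sp̄ classifying L₀ → L₀ ∘ i₁ ∘ L₁, Fun(Δ¹, 𝒞₀) → 𝒞₀ evaluation at 1, and
𝒞₁ → 𝒞₀ given by L₀ ∘ i₁ — is Cartesian: 𝒞 ≃ Fun(Δ¹, 𝒞₀) ×_{𝒞₀} 𝒞₁.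
The fiber product is modelled by the category `GlueObj` of triples (an arrow in 𝒞₀,
an object of 𝒞₁, an identification of the target of the arrow with its image).
-/

open CategoryTheory CategoryTheory.Limits

/-- A recollement in the sense of Lurie, Higher Algebra A.8.1: a category `C` with finite
limits, two (fully faithful embeddings of) subcategories `i₀ : C₀ ⥤ C`, `i₁ : C₁ ⥤ C`
admitting left exact left adjoints `L₀`, `L₁`, such that `L₁ ∘ i₀` is constant at a final
object and `(L₀, L₁)` jointly detect equivalences. -/
structure Recollement (C : Type*) (C₀ : Type*) (C₁ : Type*)
    [Category C] [Category C₀] [Category C₁] where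
  hasFiniteLimits : HasFiniteLimits C
  i₀ : C₀ ⥤ C
  i₁ : C₁ ⥤ C
  i₀_full : i₀.Full
  i₀_faithful : i₀.Faithful
  i₁_full : i₁.Full
  i₁_faithful : i₁.Faithful
  L₀ : C ⥤ C₀
  L₁ : C ⥤ C₁
  adj₀ : L₀ ⊣ i₀
  adj₁ : L₁ ⊣ i₁
  L₀_leftExact : PreservesFiniteLimits L₀
  L₁_leftExact : PreservesFiniteLimits L₁
  term : C₁
  term_isTerminal : IsTerminal term
  L₁_comp_i₀ : i₀ ⋙ L₁ ≅ (Functor.const C₀).obj term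
  jointly_conservative :
    ∀ {x y : C} (f : x ⟶ y), IsIso (L₀.map f) → IsIso (L₁.map f) → IsIso f

/-- Objects of the (2-)fiber product of `F : A ⥤ T` and `G : B ⥤ T`. -/
structure GlueObj {A B T : Type*} [Category A] [Category B] [Category T]
    (F : A ⥤ T) (G : B ⥤ T) where
  left : A
  right : B
  iso : F.obj left ≅ G.obj right

/-- Morphisms in the fiber product of `F` and `G`. -/
@[ext]
structure GlueHom {A B T : Type*} [Category A] [Category B] [Category T]
    {F : A ⥤ T} {G : B ⥤ T} (x y : GlueObj F G) where
  l : x.left ⟶ y.left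
  r : x.right ⟶ y.right
  w : F.map l ≫ y.iso.hom = x.iso.hom ≫ G.map r

instance {A B T : Type*} [Category A] [Category B] [Category T]
    (F : A ⥤ T) (G : B ⥤ T) : Category (GlueObj F G) where
  Hom := GlueHom
  id x := { l := 𝟙 _, r := 𝟙 _, w := by simp }
  comp f g :=
    ⟨f.l ≫ g.l, f.r ≫ g.r, by
      rw [Functor.map_comp, Functor.map_comp, Category.assoc, g.w, ← Category.assoc, f.w,
        Category.assoc]⟩
  id_comp f := by apply GlueHom.ext <;> simp
  comp_id f := by apply GlueHom.ext <;> simp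
  assoc f g h := by apply GlueHom.ext <;> simp

/-- First projection of the fiber product. -/
def glueFst {A B T : Type*} [Category A] [Category B] [Category T]
    (F : A ⥤ T) (G : B ⥤ T) : GlueObj F G ⥤ A where
  obj x := x.left
  map f := f.l

/-- Second projection of the fiber product. -/
def glueSnd {A B T : Type*} [Category A] [Category B] [Category T]
    (F : A ⥤ T) (G : B ⥤ T) : GlueObj F G ⥤ B where
  obj x := x.right
  map f := f.r

/-- The functor sp̄ : 𝒞 → Fun(Δ¹, 𝒞₀) classifying the natural transformation
`L₀ → L₀ ∘ i₁ ∘ L₁` induced by the unit `id → i₁ ∘ L₁`. -/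
def spBar {C C₀ C₁ : Type*} [Category C] [Category C₀] [Category C₁]
    (R : Recollement C C₀ C₁) : C ⥤ Arrow C₀ where
  obj x := Arrow.mk (R.L₀.map (R.adj₁.unit.app x))
  map {x y} f := Arrow.homMk (u := R.L₀.map f) (v := R.L₀.map (R.i₁.map (R.L₁.map f)))
    (by
      dsimp
      rw [← Functor.map_comp, ← Functor.map_comp]
      congr 1
      exact R.adj₁.unit.naturality f)
  map_id x := by
    apply CommaMorphism.ext <;> simp
  map_comp f g := by
    apply CommaMorphism.ext <;> simp

namespace RecollementAux

open CategoryTheory CategoryTheory.Limits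

variable {C C₀ C₁ D : Type*} [Category C] [Category C₀] [Category C₁] [Category D]

/-- In a limit pullback cone whose second leg of the cospan is an isomorphism,
the first projection is an isomorphism. -/
theorem isIso_fst_of_isIso {W X Y Z : C} {u : X ⟶ Z} {v : Y ⟶ Z} {a : W ⟶ X} {b : W ⟶ Y}
    {w : a ≫ u = b ≫ v} (h : IsLimit (PullbackCone.mk a b w)) [IsIso v] : IsIso a := by
  obtain ⟨l, hl1, hl2⟩ := PullbackCone.IsLimit.lift' h (𝟙 X) (u ≫ inv v) (by simp)
  simp only [PullbackCone.mk_fst] at hl1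
  simp only [PullbackCone.mk_snd] at hl2
  refine ⟨⟨l, ?_, hl1⟩⟩
  apply PullbackCone.IsLimit.hom_ext h <;>
    simp only [PullbackCone.mk_fst, PullbackCone.mk_snd, Category.assoc, Category.id_comp]
  · erw [Category.assoc, hl1, Category.comp_id, Category.id_comp]
  · erw [Category.assoc, hl2, ← Category.assoc, w, Category.assoc, IsIso.hom_inv_id, Category.comp_id,
      Category.id_comp]

/-- In a limit pullback cone whose first leg of the cospan is an isomorphism,
the second projection is an isomorphism. -/
theorem isIso_snd_of_isIso {W X Y Z : C} {u : X ⟶ Z} {v : Y ⟶ Z} {a : W ⟶ X} {b : W ⟶ Y}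
    {w : a ≫ u = b ≫ v} (h : IsLimit (PullbackCone.mk a b w)) [IsIso u] : IsIso b := by
  obtain ⟨l, hl1, hl2⟩ := PullbackCone.IsLimit.lift' h (v ≫ inv u) (𝟙 Y) (by simp)
  simp only [PullbackCone.mk_fst] at hl1
  simp only [PullbackCone.mk_snd] at hl2
  refine ⟨⟨l, ?_, hl2⟩⟩
  apply PullbackCone.IsLimit.hom_ext h <;>
    simp only [PullbackCone.mk_fst, PullbackCone.mk_snd, Category.assoc, Category.id_comp]
  · erw [Category.assoc, hl1, ← Category.assoc, ← w, Category.assoc, IsIso.hom_inv_id,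
      Category.comp_id, Category.id_comp]
  · erw [Category.assoc, hl2, Category.comp_id, Category.id_comp]

/-- Compatibility of the unit with arbitrary morphisms between images, valid when the
right adjoint is fully faithful. -/
theorem unit_compat {L : C ⥤ D} {i : D ⥤ C} (adj : L ⊣ i) [i.Full] [i.Faithful]
    {a b : C} (u : L.obj a ⟶ L.obj b) :
    L.map (adj.unit.app a) ≫ L.map (i.map u) = u ≫ L.map (adj.unit.app b) := by
  rw [← cancel_mono (adj.counit.app (L.obj b))]
  simp

theorem isIso_L_map_unit {L : C ⥤ D} {i : D ⥤ C} (adj : L ⊣ i) [i.Full] [i.Faithful] (x : C) :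
    IsIso (L.map (adj.unit.app x)) := by
  refine ⟨⟨adj.counit.app (L.obj x), adj.left_triangle_components x, ?_⟩⟩
  rw [← cancel_mono (adj.counit.app (L.obj x))]
  simp

theorem isIso_of_isTerminal {X Y : C} (hX : IsTerminal X) (hY : IsTerminal Y) (f : X ⟶ Y) :
    IsIso f :=
  ⟨hX.from Y, hX.hom_ext _ _, hY.hom_ext _ _⟩

/-- An isomorphism in the glued category from componentwise isomorphisms. -/
def glueIso {A B T : Type*} [Category A] [Category B] [Category T] {F : A ⥤ T} {G : B ⥤ T}
    {x y : GlueObj F G} (l : x.left ≅ y.left) (r : x.right ≅ y.right)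
    (w : F.map l.hom ≫ y.iso.hom = x.iso.hom ≫ G.map r.hom) : x ≅ y where
  hom := ⟨l.hom, r.hom, w⟩
  inv := ⟨l.inv, r.inv, by
    calc F.map l.inv ≫ x.iso.hom
        = F.map l.inv ≫ (x.iso.hom ≫ G.map r.hom) ≫ G.map r.inv := by
          simp [← Functor.map_comp]
      _ = F.map l.inv ≫ (F.map l.hom ≫ y.iso.hom) ≫ G.map r.inv := by rw [w]
      _ = y.iso.hom ≫ G.map r.inv := by
          rw [← Category.assoc, ← Category.assoc, ← Functor.map_comp]
          simp⟩
  hom_inv_id := by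
    apply GlueHom.ext
    · exact l.hom_inv_id
    · exact r.hom_inv_id
  inv_hom_id := by
    apply GlueHom.ext
    · exact l.inv_hom_id
    · exact r.inv_hom_id

variable (R : Recollement C C₀ C₁)

noncomputable def isTerminalL₁i₀ (a : C₀) : IsTerminal (R.L₁.obj (R.i₀.obj a)) :=
  IsTerminal.ofIso R.term_isTerminal (R.L₁_comp_i₀.app a).symm

/-- The canonical functor from `C` to the glued category. -/
def toGlue : C ⥤ GlueObj (Arrow.rightFunc : Arrow C₀ ⥤ C₀) (R.i₁ ⋙ R.L₀) where
  obj x := ⟨(spBar R).obj x, R.L₁.obj x, Iso.refl _⟩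
  map f := ⟨(spBar R).map f, R.L₁.map f, by erw [Category.comp_id, Category.id_comp]; rfl⟩
  map_id x := by
    apply GlueHom.ext
    · show (spBar R).map (𝟙 x) = 𝟙 _
      simp
    · show R.L₁.map (𝟙 x) = 𝟙 _
      simp
  map_comp f g := by
    apply GlueHom.ext
    · show (spBar R).map (f ≫ g) = (spBar R).map f ≫ (spBar R).map g
      simp
    · show R.L₁.map (f ≫ g) = R.L₁.map f ≫ R.L₁.map g
      simp

section WithLimits

variable [HasFiniteLimits C] [PreservesFiniteLimits R.L₀] [PreservesFiniteLimits R.L₁]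

set_option linter.unusedSectionVars false

theorem isIso_L₀_fst (z W : C) (u : W ⟶ R.i₀.obj (R.L₀.obj z))
    [R.i₀.Full] [R.i₀.Faithful] :
    IsIso (R.L₀.map (pullback.fst u (R.adj₀.unit.app z))) := by
  haveI : IsIso (R.L₀.map (R.adj₀.unit.app z)) := isIso_L_map_unit R.adj₀ z
  exact isIso_fst_of_isIso (isLimitOfHasPullbackOfPreservesLimit R.L₀ u (R.adj₀.unit.app z))

theorem isIso_L₁_snd {a c : C₀} (g : a ⟶ c) {z : C} (v : z ⟶ R.i₀.obj c) :
    IsIso (R.L₁.map (pullback.snd (R.i₀.map g) v)) := by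
  haveI : IsIso (R.L₁.map (R.i₀.map g)) :=
    isIso_of_isTerminal (isTerminalL₁i₀ R a) (isTerminalL₁i₀ R c) _
  exact isIso_snd_of_isIso (isLimitOfHasPullbackOfPreservesLimit R.L₁ (R.i₀.map g) v)

theorem kappa_comm (y : C) :
    R.adj₀.unit.app y ≫ R.i₀.map (R.L₀.map (R.adj₁.unit.app y))
      = R.adj₁.unit.app y ≫ R.adj₀.unit.app (R.i₁.obj (R.L₁.obj y)) := by
  simpa using (R.adj₀.unit.naturality (R.adj₁.unit.app y)).symm

/-- The canonical comparison map from `y` to the fracture pullback. -/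
noncomputable def kappa (y : C) :
    y ⟶ pullback (R.i₀.map (R.L₀.map (R.adj₁.unit.app y)))
      (R.adj₀.unit.app (R.i₁.obj (R.L₁.obj y))) :=
  pullback.lift _ _ (kappa_comm R y)

theorem kappa_isIso (y : C) [R.i₀.Full] [R.i₀.Faithful] [R.i₁.Full] [R.i₁.Faithful] :
    IsIso (kappa R y) := by
  apply R.jointly_conservative
  · haveI h1 : IsIso (R.L₀.map (pullback.fst (R.i₀.map (R.L₀.map (R.adj₁.unit.app y)))
        (R.adj₀.unit.app (R.i₁.obj (R.L₁.obj y))))) := isIso_L₀_fst R _ _ _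
    haveI h2 : IsIso (R.L₀.map (R.adj₀.unit.app y)) := isIso_L_map_unit R.adj₀ y
    have key : R.L₀.map (kappa R y)
        ≫ R.L₀.map (pullback.fst (R.i₀.map (R.L₀.map (R.adj₁.unit.app y)))
          (R.adj₀.unit.app (R.i₁.obj (R.L₁.obj y))))
        = R.L₀.map (R.adj₀.unit.app y) := by
      rw [← Functor.map_comp, kappa, pullback.lift_fst]
    exact IsIso.of_isIso_fac_right key
  · haveI h1 : IsIso (R.L₁.map (pullback.snd (R.i₀.map (R.L₀.map (R.adj₁.unit.app y)))
        (R.adj₀.unit.app (R.i₁.obj (R.L₁.obj y))))) := isIso_L₁_snd R _ _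
    haveI h2 : IsIso (R.L₁.map (R.adj₁.unit.app y)) := isIso_L_map_unit R.adj₁ y
    have key : R.L₁.map (kappa R y)
        ≫ R.L₁.map (pullback.snd (R.i₀.map (R.L₀.map (R.adj₁.unit.app y)))
          (R.adj₀.unit.app (R.i₁.obj (R.L₁.obj y))))
        = R.L₁.map (R.adj₁.unit.app y) := by
      rw [← Functor.map_comp, kappa, pullback.lift_snd]
    exact IsIso.of_isIso_fac_right key

theorem toGlue_faithful : (toGlue R).Faithful := by
  haveI := R.i₀_full; haveI := R.i₀_faithful; haveI := R.i₁_full; haveI := R.i₁_faithful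
  constructor
  intro x y f g hfg
  have e0 : R.L₀.map f = R.L₀.map g :=
    congrArg CommaMorphism.left (congrArg GlueHom.l hfg)
  have e1 : R.L₁.map f = R.L₁.map g := congrArg GlueHom.r hfg
  haveI := kappa_isIso R y
  rw [← cancel_mono (kappa R y)]
  apply pullback.hom_ext
  · simp only [kappa, Category.assoc, pullback.lift_fst]
    rw [show f ≫ R.adj₀.unit.app y = R.adj₀.unit.app x ≫ R.i₀.map (R.L₀.map f) from by
        simpa using R.adj₀.unit.naturality f, e0,
      show R.adj₀.unit.app x ≫ R.i₀.map (R.L₀.map g) = g ≫ R.adj₀.unit.app y from by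
        simpa using (R.adj₀.unit.naturality g).symm]
  · simp only [kappa, Category.assoc, pullback.lift_snd]
    rw [show f ≫ R.adj₁.unit.app y = R.adj₁.unit.app x ≫ R.i₁.map (R.L₁.map f) from by
        simpa using R.adj₁.unit.naturality f, e1,
      show R.adj₁.unit.app x ≫ R.i₁.map (R.L₁.map g) = g ≫ R.adj₁.unit.app y from by
        simpa using (R.adj₁.unit.naturality g).symm]

theorem toGlue_full : (toGlue R).Full := by
  haveI := R.i₀_full; haveI := R.i₀_faithful; haveI := R.i₁_full; haveI := R.i₁_faithful
  constructor
  intro x y h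
  have hright : h.l.right = R.L₀.map (R.i₁.map h.r) := by
    have hw := h.w
    simp only [toGlue, Iso.refl_hom, Category.comp_id, Category.id_comp] at hw
    erw [Category.comp_id, Category.id_comp] at hw
    exact hw
  have hlw : h.l.left ≫ R.L₀.map (R.adj₁.unit.app y)
      = R.L₀.map (R.adj₁.unit.app x) ≫ R.L₀.map (R.i₁.map h.r) := by
    erw [← hright]; exact h.l.w
  have hnat : R.i₁.map h.r ≫ R.adj₀.unit.app (R.i₁.obj (R.L₁.obj y))
      = R.adj₀.unit.app (R.i₁.obj (R.L₁.obj x)) ≫ R.i₀.map (R.L₀.map (R.i₁.map h.r)) :=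
    R.adj₀.unit.naturality (R.i₁.map h.r)
  have mcond : (pullback.fst (R.i₀.map (R.L₀.map (R.adj₁.unit.app x)))
        (R.adj₀.unit.app (R.i₁.obj (R.L₁.obj x))) ≫ R.i₀.map h.l.left)
        ≫ R.i₀.map (R.L₀.map (R.adj₁.unit.app y))
      = (pullback.snd (R.i₀.map (R.L₀.map (R.adj₁.unit.app x)))
        (R.adj₀.unit.app (R.i₁.obj (R.L₁.obj x))) ≫ R.i₁.map h.r)
        ≫ R.adj₀.unit.app (R.i₁.obj (R.L₁.obj y)) := by
    simp only [Category.assoc]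
    erw [Category.assoc, hnat, ← Functor.map_comp, hlw, Functor.map_comp, pullback.condition_assoc]
    rfl
  set m : pullback (R.i₀.map (R.L₀.map (R.adj₁.unit.app x))) (R.adj₀.unit.app (R.i₁.obj (R.L₁.obj x)))
      ⟶ pullback (R.i₀.map (R.L₀.map (R.adj₁.unit.app y))) (R.adj₀.unit.app (R.i₁.obj (R.L₁.obj y))) :=
    pullback.lift
      (pullback.fst (R.i₀.map (R.L₀.map (R.adj₁.unit.app x)))
        (R.adj₀.unit.app (R.i₁.obj (R.L₁.obj x))) ≫ R.i₀.map h.l.left)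
      (pullback.snd (R.i₀.map (R.L₀.map (R.adj₁.unit.app x)))
        (R.adj₀.unit.app (R.i₁.obj (R.L₁.obj x))) ≫ R.i₁.map h.r) mcond with hm
  haveI := kappa_isIso R y
  refine ⟨kappa R x ≫ m ≫ inv (kappa R y), ?_⟩
  have einv0 : inv (kappa R y) ≫ R.adj₀.unit.app y
      = pullback.fst (R.i₀.map (R.L₀.map (R.adj₁.unit.app y)))
        (R.adj₀.unit.app (R.i₁.obj (R.L₁.obj y))) := by
    rw [IsIso.inv_comp_eq]
    exact (pullback.lift_fst _ _ _).symm
  have einv1 : inv (kappa R y) ≫ R.adj₁.unit.app y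
      = pullback.snd (R.i₀.map (R.L₀.map (R.adj₁.unit.app y)))
        (R.adj₀.unit.app (R.i₁.obj (R.L₁.obj y))) := by
    rw [IsIso.inv_comp_eq]
    exact (pullback.lift_snd _ _ _).symm
  have em0 : m ≫ pullback.fst (R.i₀.map (R.L₀.map (R.adj₁.unit.app y)))
        (R.adj₀.unit.app (R.i₁.obj (R.L₁.obj y)))
      = pullback.fst (R.i₀.map (R.L₀.map (R.adj₁.unit.app x)))
        (R.adj₀.unit.app (R.i₁.obj (R.L₁.obj x))) ≫ R.i₀.map h.l.left := by
    rw [hm]; exact pullback.lift_fst _ _ _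
  have em1 : m ≫ pullback.snd (R.i₀.map (R.L₀.map (R.adj₁.unit.app y)))
        (R.adj₀.unit.app (R.i₁.obj (R.L₁.obj y)))
      = pullback.snd (R.i₀.map (R.L₀.map (R.adj₁.unit.app x)))
        (R.adj₀.unit.app (R.i₁.obj (R.L₁.obj x))) ≫ R.i₁.map h.r := by
    rw [hm]; exact pullback.lift_snd _ _ _
  have hstep0 : (kappa R x ≫ m ≫ inv (kappa R y)) ≫ R.adj₀.unit.app y
      = R.adj₀.unit.app x ≫ R.i₀.map h.l.left := by
    simp only [Category.assoc]
    rw [einv0, em0]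
    simp only [kappa]
    erw [pullback.lift_fst_assoc]
    rfl
  have hstep1 : (kappa R x ≫ m ≫ inv (kappa R y)) ≫ R.adj₁.unit.app y
      = R.adj₁.unit.app x ≫ R.i₁.map h.r := by
    simp only [Category.assoc]
    rw [einv1, em1]
    simp only [kappa]
    erw [pullback.lift_snd_assoc]
    rfl
  have e0 : R.L₀.map (kappa R x ≫ m ≫ inv (kappa R y)) = h.l.left := by
    haveI : IsIso (R.L₀.map (R.adj₀.unit.app y)) := isIso_L_map_unit R.adj₀ y
    refine (cancel_mono (R.L₀.map (R.adj₀.unit.app y))).1 ?_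
    erw [← Functor.map_comp, hstep0,
      Functor.map_comp, unit_compat R.adj₀]
    rfl
  have e1 : R.L₁.map (kappa R x ≫ m ≫ inv (kappa R y)) = h.r := by
    haveI : IsIso (R.L₁.map (R.adj₁.unit.app y)) := isIso_L_map_unit R.adj₁ y
    refine (cancel_mono (R.L₁.map (R.adj₁.unit.app y))).1 ?_
    erw [← Functor.map_comp, hstep1,
      Functor.map_comp, unit_compat R.adj₁]
  have hl : (spBar R).map (kappa R x ≫ m ≫ inv (kappa R y)) = h.l := by
    apply CommaMorphism.ext
    · simpa [spBar] using e0
    · simp only [spBar, Arrow.homMk_right]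
      rw [e1]; exact hright.symm
  exact GlueHom.ext hl e1

theorem toGlue_essSurj : (toGlue R).EssSurj := by
  haveI := R.i₀_full; haveI := R.i₀_faithful; haveI := R.i₁_full; haveI := R.i₁_faithful
  constructor
  intro g
  set b := g.right with hb
  set f' : g.left.left ⟶ R.L₀.obj (R.i₁.obj b) := g.left.hom ≫ g.iso.hom with hf'
  set x := pullback (R.i₀.map f') (R.adj₀.unit.app (R.i₁.obj b)) with hx
  haveI h0 : IsIso (R.L₀.map (pullback.fst (R.i₀.map f') (R.adj₀.unit.app (R.i₁.obj b)))) :=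
    isIso_L₀_fst R _ _ _
  haveI h1 : IsIso (R.L₁.map (pullback.snd (R.i₀.map f') (R.adj₀.unit.app (R.i₁.obj b)))) :=
    isIso_L₁_snd R _ _
  set α : R.L₀.obj x ≅ g.left.left :=
    asIso (R.L₀.map (pullback.fst (R.i₀.map f') (R.adj₀.unit.app (R.i₁.obj b))))
      ≪≫ asIso (R.adj₀.counit.app g.left.left) with hα
  set β : R.L₁.obj x ≅ b :=
    asIso (R.L₁.map (pullback.snd (R.i₀.map f') (R.adj₀.unit.app (R.i₁.obj b))))
      ≪≫ asIso (R.adj₁.counit.app b) with hβ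
  have hL : α.hom ≫ f'
      = R.L₀.map (pullback.snd (R.i₀.map f') (R.adj₀.unit.app (R.i₁.obj b))) := by
    rw [hα]
    simp only [Iso.trans_hom, asIso_hom, Category.assoc]
    rw [← R.adj₀.counit_naturality f', ← Functor.map_comp_assoc, pullback.condition,
      Functor.map_comp_assoc]
    simp
  have hR : R.L₀.map (R.adj₁.unit.app x) ≫ R.L₀.map (R.i₁.map β.hom)
      = R.L₀.map (pullback.snd (R.i₀.map f') (R.adj₀.unit.app (R.i₁.obj b))) := by
    rw [← Functor.map_comp]
    congr 1
    rw [hβ]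
    simp only [Iso.trans_hom, asIso_hom, Functor.map_comp]
    rw [← Category.assoc]
    have hn := R.adj₁.unit.naturality
      (pullback.snd (R.i₀.map f') (R.adj₀.unit.app (R.i₁.obj b)))
    simp only [Functor.id_map, Functor.comp_map] at hn
    rw [← hn]
    simp
  have harrow : α.hom ≫ g.left.hom
      = R.L₀.map (R.adj₁.unit.app x)
        ≫ (R.L₀.mapIso (R.i₁.mapIso β) ≪≫ g.iso.symm).hom := by
    simp only [Iso.trans_hom, Functor.mapIso_hom, Iso.symm_hom]
    erw [← Category.assoc, hR, Iso.eq_comp_inv, Category.assoc, ← hf', hL]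
  refine ⟨x, ⟨glueIso (F := (Arrow.rightFunc : Arrow C₀ ⥤ C₀)) (G := R.i₁ ⋙ R.L₀)
    (Arrow.isoMk α (R.L₀.mapIso (R.i₁.mapIso β) ≪≫ g.iso.symm) ?_) β ?_⟩⟩
  · exact harrow
  · erw [Category.id_comp]
    show (R.L₀.mapIso (R.i₁.mapIso β) ≪≫ g.iso.symm).hom ≫ g.iso.hom = _
    simp
    rfl

end WithLimits

end RecollementAux

/-- A recollement is the fiber product of the arrow category of 𝒞₀, evaluated at 1,
with 𝒞₁ mapping in via L₀ ∘ i₁; the equivalence is compatible with sp̄ and L₁. -/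
theorem recollement_cartesian_square
    {C C₀ C₁ : Type*} [Category C] [Category C₀] [Category C₁]
    (R : Recollement C C₀ C₁) :
    ∃ e : C ≌ GlueObj (Arrow.rightFunc : Arrow C₀ ⥤ C₀) (R.i₁ ⋙ R.L₀),
      Nonempty (e.functor ⋙ glueFst _ _ ≅ spBar R) ∧
      Nonempty (e.functor ⋙ glueSnd _ _ ≅ R.L₁) := by
  haveI := R.hasFiniteLimits
  haveI := R.L₀_leftExact
  haveI := R.L₁_leftExact
  haveI : (RecollementAux.toGlue R).Faithful := RecollementAux.toGlue_faithful R
  haveI : (RecollementAux.toGlue R).Full := RecollementAux.toGlue_full R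
  haveI : (RecollementAux.toGlue R).EssSurj := RecollementAux.toGlue_essSurj R
  haveI : (RecollementAux.toGlue R).IsEquivalence := {}
  refine ⟨(RecollementAux.toGlue R).asEquivalence, ⟨?_⟩, ⟨?_⟩⟩
  · exact NatIso.ofComponents (fun x => Iso.refl _)
      (by intro x y f; simp [RecollementAux.toGlue, glueFst, Functor.asEquivalence])
  · exact NatIso.ofComponents (fun x => Iso.refl _)
      (by intro x y f; simp [RecollementAux.toGlue, glueSnd, Functor.asEquivalence])
end

section
/- Let 𝒞 be the recollement of (𝒞₀, 𝒞₁) and 𝒟 the recollement of (𝒟₀, 𝒟₁), with localizations L₀, L₁ resp. R₀, R₁ and inclusions i₀, i₁ resp. j₀, j₁. Suppose given adjunctions F₀ : 𝒞₀ ⇄ 𝒟₀ : G₀ and F₁ : 𝒞₁ ⇄ 𝒟₁ : G₁ together with homotopies F₀ ∘ (L₀ ∘ i₁) ≃ (R₀ ∘ j₁) ∘ F₁ and (L₀ ∘ i₁) ∘ G₁ ≃ G₀ ∘ (R₀ ∘ j₁). Then the induced functors F : 𝒞 → 𝒟 (glued from F₀ ∘ L₀ and F₁ ∘ L₁) and G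 : 𝒟 → 𝒞 (glued from G₀ ∘ R₀ and G₁ ∘ R₁) form an adjunction F ⊣ G. -/
/-!
STATEMENT 5: adjunctions between recollements.  Given recollements 𝒞 of (𝒞₀, 𝒞₁) and
𝒟 of (𝒟₀, 𝒟₁), adjunctions F₀ ⊣ G₀ and F₁ ⊣ G₁ between the pieces, and homotopies
F₀ ∘ (L₀ ∘ i₁) ≃ (R₀ ∘ j₁) ∘ F₁ and (L₀ ∘ i₁) ∘ G₁ ≃ G₀ ∘ (R₀ ∘ j₁), the glued functors
F : 𝒞 → 𝒟 (from F₀ ∘ L₀, F₁ ∘ L₁) and G : 𝒟 → 𝒞 (from G₀ ∘ R₀, G₁ ∘ R₁) are adjoint.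
-/

open CategoryTheory CategoryTheory.Limits

section GlueHelpers

variable {C' : Type*} [Category C']

lemma aux_isIso_fst_of_isPullback {P X Y Z : C'} {fst : P ⟶ X} {snd : P ⟶ Y}
    {f : X ⟶ Z} {g : Y ⟶ Z} (h : IsPullback fst snd f g) [IsIso g] : IsIso fst := by
  refine ⟨h.lift (𝟙 X) (f ≫ inv g) (by simp), ?_, by simp⟩
  apply h.hom_ext
  · simp
  · rw [Category.assoc, h.lift_snd, ← Category.assoc, h.w]
    simp

lemma aux_isIso_snd_of_terminal {P X Y Z : C'} {fst : P ⟶ X} {snd : P ⟶ Y}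
    {f : X ⟶ Z} {g : Y ⟶ Z} (h : IsPullback fst snd f g)
    (hX : IsTerminal X) (hZ : IsTerminal Z) : IsIso snd := by
  refine ⟨h.lift (hX.from Y) (𝟙 Y) (hZ.hom_ext _ _), ?_, by simp⟩
  apply h.hom_ext
  · exact hX.hom_ext _ _
  · simp

end GlueHelpers

section CommaGlue

variable {A₀ A₁ B₀ B₁ : Type*} [Category A₀] [Category A₁] [Category B₀] [Category B₁]
variable (φ : A₁ ⥤ A₀) (ψ : B₁ ⥤ B₀)
variable (F₀ : A₀ ⥤ B₀) (G₀ : B₀ ⥤ A₀) (adj₀ : F₀ ⊣ G₀)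
variable (F₁ : A₁ ⥤ B₁) (G₁ : B₁ ⥤ A₁) (adj₁ : F₁ ⊣ G₁)
variable (β : G₁ ⋙ φ ≅ ψ ⋙ G₀)

/-- the `F`-side gluing natural transformation, the mate of `β`. -/
def glueTau : φ ⋙ F₀ ⟶ F₁ ⋙ ψ where
  app c := F₀.map (φ.map (adj₁.unit.app c) ≫ β.hom.app (F₁.obj c)) ≫
      adj₀.counit.app (ψ.obj (F₁.obj c))
  naturality c c' u := by
    have hu : u ≫ adj₁.unit.app c' = adj₁.unit.app c ≫ G₁.map (F₁.map u) := by
      simpa using adj₁.unit.naturality u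
    have hb : φ.map (G₁.map (F₁.map u)) ≫ β.hom.app (F₁.obj c') =
        β.hom.app (F₁.obj c) ≫ G₀.map (ψ.map (F₁.map u)) := by
      simpa using β.hom.naturality (F₁.map u)
    have hc : F₀.map (G₀.map (ψ.map (F₁.map u))) ≫ adj₀.counit.app (ψ.obj (F₁.obj c')) =
        adj₀.counit.app (ψ.obj (F₁.obj c)) ≫ ψ.map (F₁.map u) :=
      adj₀.counit.naturality _
    simp only [Functor.comp_map, Functor.map_comp, Category.assoc]
    rw [← Category.assoc (F₀.map (φ.map u)), ← F₀.map_comp, ← φ.map_comp, hu,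
      φ.map_comp, F₀.map_comp, Category.assoc, ← Category.assoc (F₀.map (φ.map (G₁.map (F₁.map u)))),
      ← F₀.map_comp, hb, F₀.map_comp, Category.assoc, hc]

lemma glue_mate1 (c : A₁) :
    adj₀.unit.app (φ.obj c) ≫ G₀.map ((glueTau φ ψ F₀ G₀ adj₀ F₁ G₁ adj₁ β).app c) =
      φ.map (adj₁.unit.app c) ≫ β.hom.app (F₁.obj c) := by
  have hn : (φ.map (adj₁.unit.app c) ≫ β.hom.app (F₁.obj c)) ≫
      adj₀.unit.app (G₀.obj (ψ.obj (F₁.obj c))) =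
      adj₀.unit.app (φ.obj c) ≫ G₀.map (F₀.map (φ.map (adj₁.unit.app c) ≫ β.hom.app (F₁.obj c))) := by
    simpa using (adj₀.unit.naturality (φ.map (adj₁.unit.app c) ≫ β.hom.app (F₁.obj c))).symm
  simp only [glueTau, G₀.map_comp]
  rw [← Category.assoc, ← hn, Category.assoc, adj₀.right_triangle_components]
  simp

lemma glue_mate2 (d : B₁) :
    F₀.map (β.inv.app d) ≫ (glueTau φ ψ F₀ G₀ adj₀ F₁ G₁ adj₁ β).app (G₁.obj d) ≫
      ψ.map (adj₁.counit.app d) = adj₀.counit.app (ψ.obj d) := by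
  have hc : adj₀.counit.app (ψ.obj (F₁.obj (G₁.obj d))) ≫ ψ.map (adj₁.counit.app d) =
      F₀.map (G₀.map (ψ.map (adj₁.counit.app d))) ≫ adj₀.counit.app (ψ.obj d) :=
    (adj₀.counit.naturality _).symm
  have hb : β.hom.app (F₁.obj (G₁.obj d)) ≫ G₀.map (ψ.map (adj₁.counit.app d)) =
      φ.map (G₁.map (adj₁.counit.app d)) ≫ β.hom.app d := by
    simpa using (β.hom.naturality (adj₁.counit.app d)).symm
  simp only [glueTau, Category.assoc]
  rw [hc, ← F₀.map_comp_assoc, ← F₀.map_comp_assoc]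
  simp only [Category.assoc]
  rw [hb, ← φ.map_comp_assoc, adj₁.right_triangle_components]
  simp

/-- The glued functor on comma categories. -/
@[reducible, simps]
def glueF : Comma (𝟭 A₀) φ ⥤ Comma (𝟭 B₀) ψ where
  obj X :=
    { left := F₀.obj X.left
      right := F₁.obj X.right
      hom := F₀.map X.hom ≫ (glueTau φ ψ F₀ G₀ adj₀ F₁ G₁ adj₁ β).app X.right }
  map {X Y} u :=
    { left := F₀.map u.left
      right := F₁.map u.right
      w := by
        have hw : u.left ≫ Y.hom = X.hom ≫ φ.map u.right := by simpa using u.w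
        have ht : F₀.map (φ.map u.right) ≫ (glueTau φ ψ F₀ G₀ adj₀ F₁ G₁ adj₁ β).app Y.right =
            (glueTau φ ψ F₀ G₀ adj₀ F₁ G₁ adj₁ β).app X.right ≫ ψ.map (F₁.map u.right) := by
          simpa using (glueTau φ ψ F₀ G₀ adj₀ F₁ G₁ adj₁ β).naturality u.right
        simp only [Functor.id_map]
        rw [← Category.assoc, ← F₀.map_comp, hw, F₀.map_comp, Category.assoc, ht, Category.assoc] }

/-- The glued functor on comma categories, right adjoint version. -/
@[reducible, simps]
def glueG : Comma (𝟭 B₀) ψ ⥤ Comma (𝟭 A₀) φ where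
  obj Y :=
    { left := G₀.obj Y.left
      right := G₁.obj Y.right
      hom := G₀.map Y.hom ≫ β.inv.app Y.right }
  map {X Y} u :=
    { left := G₀.map u.left
      right := G₁.map u.right
      w := by
        have hw : u.left ≫ Y.hom = X.hom ≫ ψ.map u.right := by simpa using u.w
        have hb : G₀.map (ψ.map u.right) ≫ β.inv.app Y.right =
            β.inv.app X.right ≫ φ.map (G₁.map u.right) := by
          simpa using β.inv.naturality u.right
        simp only [Functor.id_map]
        rw [← Category.assoc, ← G₀.map_comp, hw, G₀.map_comp, Category.assoc, hb, Category.assoc] }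

set_option maxHeartbeats 1000000 in
/-- The glued adjunction on comma categories. -/
def glueAdj : glueF φ ψ F₀ G₀ adj₀ F₁ G₁ adj₁ β ⊣ glueG φ ψ G₀ G₁ β :=
  Adjunction.mkOfHomEquiv
    { homEquiv := fun X Y =>
        { toFun := fun u =>
            { left := (adj₀.homEquiv _ _) u.left
              right := (adj₁.homEquiv _ _) u.right
              w := by
                have hw : u.left ≫ Y.hom =
                    (F₀.map X.hom ≫ (glueTau φ ψ F₀ G₀ adj₀ F₁ G₁ adj₁ β).app X.right) ≫
                      ψ.map u.right := by simpa using u.w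
                have hn : adj₀.unit.app X.left ≫ G₀.map (F₀.map X.hom) =
                    X.hom ≫ adj₀.unit.app (φ.obj X.right) := by
                  simpa using (adj₀.unit.naturality X.hom).symm
                have hb : β.hom.app (F₁.obj X.right) ≫ G₀.map (ψ.map u.right) =
                    φ.map (G₁.map u.right) ≫ β.hom.app Y.right := by
                  simpa using (β.hom.naturality u.right).symm
                have hm := glue_mate1 φ ψ F₀ G₀ adj₀ F₁ G₁ adj₁ β X.right
                simp only [Functor.id_map, Adjunction.homEquiv_unit, glueG_obj_left,
                  glueG_obj_right, glueG_obj_hom, Category.assoc]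
                rw [← Category.assoc (G₀.map u.left), ← G₀.map_comp, hw]
                simp only [Functor.map_comp, Category.assoc]
                rw [reassoc_of% hn, reassoc_of% hm, reassoc_of% hb]
                simp }
          invFun := fun v =>
            { left := (adj₀.homEquiv _ _).symm v.left
              right := (adj₁.homEquiv _ _).symm v.right
              w := by
                have hw : v.left ≫ (G₀.map Y.hom ≫ β.inv.app Y.right) =
                    X.hom ≫ φ.map v.right := by simpa using v.w
                have ht : F₀.map (φ.map v.right) ≫
                    (glueTau φ ψ F₀ G₀ adj₀ F₁ G₁ adj₁ β).app (G₁.obj Y.right) =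
                    (glueTau φ ψ F₀ G₀ adj₀ F₁ G₁ adj₁ β).app X.right ≫
                      ψ.map (F₁.map v.right) := by
                  simpa using (glueTau φ ψ F₀ G₀ adj₀ F₁ G₁ adj₁ β).naturality v.right
                have hc : F₀.map (G₀.map Y.hom) ≫ adj₀.counit.app (ψ.obj Y.right) =
                    adj₀.counit.app Y.left ≫ Y.hom := by
                  simpa using adj₀.counit.naturality Y.hom
                have hm := glue_mate2 φ ψ F₀ G₀ adj₀ F₁ G₁ adj₁ β Y.right
                simp only [Functor.id_map, Adjunction.homEquiv_counit, Functor.map_comp,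
                  Category.assoc, glueF_obj_left, glueF_obj_right, glueF_obj_hom]
                rw [← reassoc_of% ht, ← F₀.map_comp_assoc, ← hw]
                simp only [Functor.map_comp, Category.assoc]
                rw [hm, hc] }
          left_inv := fun u => by
            ext
            · simp
            · simp
          right_inv := fun v => by
            ext
            · simp
            · simp }
      homEquiv_naturality_left_symm := fun f g => by
        ext
        · simp [Adjunction.homEquiv_counit]
        · simp [Adjunction.homEquiv_counit]
      homEquiv_naturality_right := fun f g => by
        ext
        · simp [Adjunction.homEquiv_unit]
        · simp [Adjunction.homEquiv_unit] }

end CommaGlue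

open CategoryTheory CategoryTheory.Limits

namespace Recollement

variable {C C₀ C₁ : Type*} [Category C] [Category C₀] [Category C₁]

/-- The comparison functor from a recollement to the comma category model. -/
@[reducible, simps]
def E (R : Recollement C C₀ C₁) : C ⥤ Comma (𝟭 C₀) (R.i₁ ⋙ R.L₀) where
  obj x :=
    { left := R.L₀.obj x
      right := R.L₁.obj x
      hom := R.L₀.map (R.adj₁.unit.app x) }
  map {x y} f :=
    { left := R.L₀.map f
      right := R.L₁.map f
      w := by
        have h : f ≫ R.adj₁.unit.app y = R.adj₁.unit.app x ≫ R.i₁.map (R.L₁.map f) := by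
          simpa using R.adj₁.unit.naturality f
        simp only [Functor.id_map, Functor.comp_map]
        rw [← R.L₀.map_comp, h, R.L₀.map_comp] }
  map_id x := by
    apply CommaMorphism.ext <;> simp
  map_comp f g := by
    apply CommaMorphism.ext <;> simp

theorem E_isEquivalence (R : Recollement C C₀ C₁) : R.E.IsEquivalence := by
  haveI := R.hasFiniteLimits
  haveI := R.L₀_leftExact
  haveI := R.L₁_leftExact
  haveI := R.i₀_full
  haveI := R.i₀_faithful
  haveI := R.i₁_full
  haveI := R.i₁_faithful
  have hη₀ : ∀ x : C, IsIso (R.L₀.map (R.adj₀.unit.app x)) := by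
    intro x
    have h : R.L₀.map (R.adj₀.unit.app x) ≫ R.adj₀.counit.app (R.L₀.obj x) = 𝟙 _ :=
      R.adj₀.left_triangle_components x
    exact IsIso.of_isIso_fac_right h
  have hterm : ∀ c : C₀, IsTerminal (R.L₁.obj (R.i₀.obj c)) := fun c =>
    IsTerminal.ofIso R.term_isTerminal (R.L₁_comp_i₀.app c).symm
  have hfst : ∀ (c₀ : C₀) (c₁ : C₁) (f : c₀ ⟶ R.L₀.obj (R.i₁.obj c₁)),
      IsIso (R.L₀.map (pullback.fst (R.i₀.map f) (R.adj₀.unit.app (R.i₁.obj c₁)))) := by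
    intro c₀ c₁ f
    have sq := (IsPullback.of_hasPullback (R.i₀.map f)
      (R.adj₀.unit.app (R.i₁.obj c₁))).map R.L₀
    haveI := hη₀ (R.i₁.obj c₁)
    exact aux_isIso_fst_of_isPullback sq
  have hsnd : ∀ (c₀ : C₀) (c₁ : C₁) (f : c₀ ⟶ R.L₀.obj (R.i₁.obj c₁)),
      IsIso (R.L₁.map (pullback.snd (R.i₀.map f) (R.adj₀.unit.app (R.i₁.obj c₁)))) := by
    intro c₀ c₁ f
    have sq := (IsPullback.of_hasPullback (R.i₀.map f)
      (R.adj₀.unit.app (R.i₁.obj c₁))).map R.L₁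
    exact aux_isIso_snd_of_terminal sq (hterm c₀) (hterm _)
  -- the canonical comparison map into the pullback
  have hθw : ∀ y : C, R.adj₀.unit.app y ≫ R.i₀.map (R.L₀.map (R.adj₁.unit.app y)) =
      R.adj₁.unit.app y ≫ R.adj₀.unit.app (R.i₁.obj (R.L₁.obj y)) := by
    intro y
    simpa using (R.adj₀.unit.naturality (R.adj₁.unit.app y)).symm
  let θ : ∀ y : C, y ⟶ pullback (R.i₀.map (R.L₀.map (R.adj₁.unit.app y)))
      (R.adj₀.unit.app (R.i₁.obj (R.L₁.obj y))) := fun y =>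
    pullback.lift (R.adj₀.unit.app y) (R.adj₁.unit.app y) (hθw y)
  have hθfst : ∀ y : C, θ y ≫ pullback.fst _ _ = R.adj₀.unit.app y := fun y =>
    pullback.lift_fst _ _ _
  have hθsnd : ∀ y : C, θ y ≫ pullback.snd _ _ = R.adj₁.unit.app y := fun y =>
    pullback.lift_snd _ _ _
  have hb₀ : ∀ y : C, R.L₀.map (θ y) ≫ (R.L₀.map (pullback.fst _ _) ≫
      R.adj₀.counit.app (R.L₀.obj y)) = 𝟙 _ := by
    intro y
    rw [← Category.assoc, ← R.L₀.map_comp, hθfst y, R.adj₀.left_triangle_components]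
  have hb₁ : ∀ y : C, R.L₁.map (θ y) ≫ (R.L₁.map (pullback.snd _ _) ≫
      R.adj₁.counit.app (R.L₁.obj y)) = 𝟙 _ := by
    intro y
    rw [← Category.assoc, ← R.L₁.map_comp, hθsnd y, R.adj₁.left_triangle_components]
  have hib₀ : ∀ y : C, IsIso (R.L₀.map (pullback.fst
      (R.i₀.map (R.L₀.map (R.adj₁.unit.app y)))
      (R.adj₀.unit.app (R.i₁.obj (R.L₁.obj y)))) ≫ R.adj₀.counit.app (R.L₀.obj y)) := by
    intro y
    haveI := hfst (R.L₀.obj y) (R.L₁.obj y) (R.L₀.map (R.adj₁.unit.app y))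
    infer_instance
  have hib₁ : ∀ y : C, IsIso (R.L₁.map (pullback.snd
      (R.i₀.map (R.L₀.map (R.adj₁.unit.app y)))
      (R.adj₀.unit.app (R.i₁.obj (R.L₁.obj y)))) ≫ R.adj₁.counit.app (R.L₁.obj y)) := by
    intro y
    haveI := hsnd (R.L₀.obj y) (R.L₁.obj y) (R.L₀.map (R.adj₁.unit.app y))
    infer_instance
  have hθ : ∀ y : C, IsIso (θ y) := by
    intro y
    apply R.jointly_conservative
    · haveI := hib₀ y
      exact IsIso.of_isIso_fac_right (hb₀ y)
    · haveI := hib₁ y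
      exact IsIso.of_isIso_fac_right (hb₁ y)
  constructor
  case faithful =>
    refine ⟨fun {x y} {h h'} hh => ?_⟩
    have e0 : R.L₀.map h = R.L₀.map h' := congrArg CommaMorphism.left hh
    have e1 : R.L₁.map h = R.L₁.map h' := congrArg CommaMorphism.right hh
    haveI := hθ y
    rw [← cancel_mono (θ y)]
    apply pullback.hom_ext
    · have n : h ≫ R.adj₀.unit.app y = R.adj₀.unit.app x ≫ R.i₀.map (R.L₀.map h) := by
        simpa using R.adj₀.unit.naturality h
      have n' : h' ≫ R.adj₀.unit.app y = R.adj₀.unit.app x ≫ R.i₀.map (R.L₀.map h') := by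
        simpa using R.adj₀.unit.naturality h'
      rw [Category.assoc, Category.assoc, hθfst, n, n', e0]
    · have n : h ≫ R.adj₁.unit.app y = R.adj₁.unit.app x ≫ R.i₁.map (R.L₁.map h) := by
        simpa using R.adj₁.unit.naturality h
      have n' : h' ≫ R.adj₁.unit.app y = R.adj₁.unit.app x ≫ R.i₁.map (R.L₁.map h') := by
        simpa using R.adj₁.unit.naturality h'
      rw [Category.assoc, Category.assoc, hθsnd, n, n', e1]
  case full =>
    refine ⟨fun {x y} v => ?_⟩
    have hv : v.left ≫ R.L₀.map (R.adj₁.unit.app y) =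
        R.L₀.map (R.adj₁.unit.app x) ≫ R.L₀.map (R.i₁.map v.right) := by
      simpa using v.w
    have hw : (R.adj₀.unit.app x ≫ R.i₀.map v.left) ≫
        R.i₀.map (R.L₀.map (R.adj₁.unit.app y)) =
        (R.adj₁.unit.app x ≫ R.i₁.map v.right) ≫
          R.adj₀.unit.app (R.i₁.obj (R.L₁.obj y)) := by
      have n : R.adj₀.unit.app x ≫ R.i₀.map (R.L₀.map (R.adj₁.unit.app x ≫
          R.i₁.map v.right)) = (R.adj₁.unit.app x ≫ R.i₁.map v.right) ≫
          R.adj₀.unit.app (R.i₁.obj (R.L₁.obj y)) := by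
        simpa using (R.adj₀.unit.naturality (R.adj₁.unit.app x ≫ R.i₁.map v.right)).symm
      rw [Category.assoc, ← R.i₀.map_comp, hv, ← R.L₀.map_comp, n]
    haveI := hθ y
    refine ⟨pullback.lift _ _ hw ≫ inv (θ y), ?_⟩
    have hx : (pullback.lift _ _ hw ≫ inv (θ y)) ≫ θ y = pullback.lift _ _ hw := by simp
    apply CommaMorphism.ext
    · -- left component
      have e : R.L₀.map (pullback.lift _ _ hw) ≫ (R.L₀.map (pullback.fst _ _) ≫
          R.adj₀.counit.app (R.L₀.obj y)) = v.left := by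
        rw [← Category.assoc, ← R.L₀.map_comp, pullback.lift_fst, R.L₀.map_comp,
          Category.assoc]
        have n : R.L₀.map (R.i₀.map v.left) ≫ R.adj₀.counit.app (R.L₀.obj y) =
            R.adj₀.counit.app (R.L₀.obj x) ≫ v.left := by
          simpa using R.adj₀.counit.naturality v.left
        rw [n, ← Category.assoc]
        simp
      have key : R.L₀.map (pullback.lift _ _ hw ≫ inv (θ y)) ≫ (R.L₀.map (θ y) ≫
          (R.L₀.map (pullback.fst _ _) ≫ R.adj₀.counit.app (R.L₀.obj y))) = v.left := by
        rw [← Category.assoc, ← R.L₀.map_comp, hx, e]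
      rw [hb₀ y, Category.comp_id] at key
      simpa using key
    · -- right component
      have e : R.L₁.map (pullback.lift _ _ hw) ≫ (R.L₁.map (pullback.snd _ _) ≫
          R.adj₁.counit.app (R.L₁.obj y)) = v.right := by
        rw [← Category.assoc, ← R.L₁.map_comp, pullback.lift_snd, R.L₁.map_comp,
          Category.assoc]
        have n : R.L₁.map (R.i₁.map v.right) ≫ R.adj₁.counit.app (R.L₁.obj y) =
            R.adj₁.counit.app (R.L₁.obj x) ≫ v.right := by
          simpa using R.adj₁.counit.naturality v.right
        rw [n, ← Category.assoc]
        simp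
      have key : R.L₁.map (pullback.lift _ _ hw ≫ inv (θ y)) ≫ (R.L₁.map (θ y) ≫
          (R.L₁.map (pullback.snd _ _) ≫ R.adj₁.counit.app (R.L₁.obj y))) = v.right := by
        rw [← Category.assoc, ← R.L₁.map_comp, hx, e]
      rw [hb₁ y, Category.comp_id] at key
      simpa using key
  case essSurj =>
    refine ⟨fun Y => ?_⟩
    haveI := hfst Y.left Y.right Y.hom
    haveI := hsnd Y.left Y.right Y.hom
    refine ⟨pullback (R.i₀.map Y.hom) (R.adj₀.unit.app (R.i₁.obj Y.right)), ⟨?_⟩⟩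
    refine Comma.isoMk
      (asIso (R.L₀.map (pullback.fst _ _)) ≪≫ asIso (R.adj₀.counit.app Y.left))
      (asIso (R.L₁.map (pullback.snd _ _)) ≪≫ asIso (R.adj₁.counit.app Y.right)) ?_
    -- the compatibility square
    have lhs : (R.L₀.map (pullback.fst (R.i₀.map Y.hom)
        (R.adj₀.unit.app (R.i₁.obj Y.right))) ≫ R.adj₀.counit.app Y.left) ≫ Y.hom =
        R.L₀.map (pullback.snd _ _) := by
      have n : R.adj₀.counit.app Y.left ≫ Y.hom =
          R.L₀.map (R.i₀.map Y.hom) ≫ R.adj₀.counit.app (R.L₀.obj (R.i₁.obj Y.right)) := by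
        simpa using (R.adj₀.counit.naturality Y.hom).symm
      rw [Category.assoc, n, ← Category.assoc, ← R.L₀.map_comp, pullback.condition,
        R.L₀.map_comp, Category.assoc]
      simp
    have rhs : R.L₀.map (R.adj₁.unit.app (pullback (R.i₀.map Y.hom)
        (R.adj₀.unit.app (R.i₁.obj Y.right)))) ≫ R.L₀.map (R.i₁.map
        (R.L₁.map (pullback.snd _ _) ≫ R.adj₁.counit.app Y.right)) =
        R.L₀.map (pullback.snd _ _) := by
      have n : R.adj₁.unit.app (pullback (R.i₀.map Y.hom)
          (R.adj₀.unit.app (R.i₁.obj Y.right))) ≫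
          R.i₁.map (R.L₁.map (pullback.snd _ _)) =
          pullback.snd _ _ ≫ R.adj₁.unit.app (R.i₁.obj Y.right) := by
        simpa using (R.adj₁.unit.naturality (pullback.snd _ _)).symm
      rw [← R.L₀.map_comp, R.i₁.map_comp, ← Category.assoc, n, Category.assoc,
        R.adj₁.right_triangle_components]
      simp
    simp only [Functor.id_map, Functor.comp_map, Iso.trans_hom, asIso_hom, E_obj_left,
      E_obj_right, E_obj_hom, Functor.map_comp]
    rw [← Category.assoc]
    rw [show ((R.L₀.map (pullback.fst _ _) ≫ R.adj₀.counit.app Y.left) ≫ Y.hom =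
      R.L₀.map (pullback.snd _ _)) from lhs]
    simp only [Functor.map_comp, Category.assoc] at rhs
    rw [Category.assoc]
    exact rhs.symm

end Recollement

/-- Adjunctions between recollements, glued from adjunctions between the pieces. -/
theorem recollement_adjunction
    {C C₀ C₁ D D₀ D₁ : Type*} [Category C] [Category C₀] [Category C₁]
    [Category D] [Category D₀] [Category D₁]
    (R : Recollement C C₀ C₁) (S : Recollement D D₀ D₁)
    (F₀ : C₀ ⥤ D₀) (G₀ : D₀ ⥤ C₀) (adj₀ : F₀ ⊣ G₀)
    (F₁ : C₁ ⥤ D₁) (G₁ : D₁ ⥤ C₁) (adj₁ : F₁ ⊣ G₁)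
    (α : R.i₁ ⋙ R.L₀ ⋙ F₀ ≅ F₁ ⋙ S.i₁ ⋙ S.L₀)
    (β : G₁ ⋙ R.i₁ ⋙ R.L₀ ≅ S.i₁ ⋙ S.L₀ ⋙ G₀) :
    ∃ (F : C ⥤ D) (G : D ⥤ C) (_ : F ⊣ G),
      Nonempty (F ⋙ S.L₀ ≅ R.L₀ ⋙ F₀) ∧ Nonempty (F ⋙ S.L₁ ≅ R.L₁ ⋙ F₁) ∧
      Nonempty (G ⋙ R.L₀ ≅ S.L₀ ⋙ G₀) ∧ Nonempty (G ⋙ R.L₁ ≅ S.L₁ ⋙ G₁) := by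
  haveI hC := R.E_isEquivalence
  haveI hD := S.E_isEquivalence
  let eC : C ≌ Comma (𝟭 C₀) (R.i₁ ⋙ R.L₀) := R.E.asEquivalence
  let eD : D ≌ Comma (𝟭 D₀) (S.i₁ ⋙ S.L₀) := S.E.asEquivalence
  let Fc : Comma (𝟭 C₀) (R.i₁ ⋙ R.L₀) ⥤ Comma (𝟭 D₀) (S.i₁ ⋙ S.L₀) :=
    glueF (R.i₁ ⋙ R.L₀) (S.i₁ ⋙ S.L₀) F₀ G₀ adj₀ F₁ G₁ adj₁ β
  let Gc : Comma (𝟭 D₀) (S.i₁ ⋙ S.L₀) ⥤ Comma (𝟭 C₀) (R.i₁ ⋙ R.L₀) :=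
    glueG (R.i₁ ⋙ R.L₀) (S.i₁ ⋙ S.L₀) G₀ G₁ β
  refine ⟨eC.functor ⋙ Fc ⋙ eD.inverse, eD.functor ⋙ Gc ⋙ eC.inverse,
    eC.toAdjunction.comp ((glueAdj (R.i₁ ⋙ R.L₀) (S.i₁ ⋙ S.L₀) F₀ G₀ adj₀ F₁ G₁ adj₁
      β).comp eD.symm.toAdjunction), ⟨?_⟩, ⟨?_⟩, ⟨?_⟩, ⟨?_⟩⟩
  · exact NatIso.ofComponents
      (fun x => (Comma.fst (𝟭 D₀) (S.i₁ ⋙ S.L₀)).mapIso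
        (eD.counitIso.app (Fc.obj (eC.functor.obj x))))
      (fun {x y} f => congrArg CommaMorphism.left
        (eD.counitIso.hom.naturality (Fc.map (eC.functor.map f))))
  · exact NatIso.ofComponents
      (fun x => (Comma.snd (𝟭 D₀) (S.i₁ ⋙ S.L₀)).mapIso
        (eD.counitIso.app (Fc.obj (eC.functor.obj x))))
      (fun {x y} f => congrArg CommaMorphism.right
        (eD.counitIso.hom.naturality (Fc.map (eC.functor.map f))))
  · exact NatIso.ofComponents
      (fun x => (Comma.fst (𝟭 C₀) (R.i₁ ⋙ R.L₀)).mapIso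
        (eC.counitIso.app (Gc.obj (eD.functor.obj x))))
      (fun {x y} f => congrArg CommaMorphism.left
        (eC.counitIso.hom.naturality (Gc.map (eD.functor.map f))))
  · exact NatIso.ofComponents
      (fun x => (Comma.snd (𝟭 C₀) (R.i₁ ⋙ R.L₀)).mapIso
        (eC.counitIso.app (Gc.obj (eD.functor.obj x))))
      (fun {x y} f => congrArg CommaMorphism.right
        (eC.counitIso.hom.naturality (Gc.map (eD.functor.map f))))
end

section
/- Proper base change implies compatibility of μ_∞-equivariant pushforward with i^*: let f : Y → X over [𝔸¹_S/ℊ_m] be a proper morphism representable by Deligne–Mumford stacks. Then the natural transformation β_f : ī_X^* ∘ f̄_* → (f̄₀)_* ∘ ī_Y^*, given on each object as the filtered colimit over n ∈ ℕ_S of the base-change maps (i_X^{(n)})^* ∘ (f^{(n)})_* → (f₀^{(n)})_* ∘ (i_Y^{(n)})^*, is an equivalence of functors D_ét(Y;Λ)^{μ_∞} → D_ét(X₀;Λ)^{μ_∞}. -/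
open CategoryTheory CategoryTheory.Limits

theorem proper_base_change_colimit_equivariant
    {I : Type*} [Category I] [IsFiltered I]
    {DYμ DX0μ : Type*} [Category DYμ] [Category DX0μ]
    [HasColimitsOfShape I DX0μ]
    -- level-n categories on Y^{(n)}, X^{(n)}, X₀^{(n)}, Y₀^{(n)}
    {DYn DXn DX0n DY0n : I → Type*}
    [∀ i, Category (DYn i)] [∀ i, Category (DXn i)]
    [∀ i, Category (DX0n i)] [∀ i, Category (DY0n i)]
    (proj : ∀ i, DYμ ⥤ DYn i)                       -- level-n component of ℱ
    (fPush : ∀ i, DYn i ⥤ DXn i)                    -- (f^{(n)})_*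
    (iXPull : ∀ i, DXn i ⥤ DX0n i)                  -- (i_X^{(n)})^*
    (iYPull : ∀ i, DYn i ⥤ DY0n i)                  -- (i_Y^{(n)})^*
    (f0Push : ∀ i, DY0n i ⥤ DX0n i)                 -- (f₀^{(n)})_*
    (incl : ∀ i, DX0n i ⥤ DX0μ)                     -- inclusion into the μ_∞-category
    (bc : ∀ i, (fPush i ⋙ iXPull i) ⟶ (iYPull i ⋙ f0Push i))  -- base-change maps
    (proper_base_change : ∀ (i : I) (Z : DYn i), IsIso ((bc i).app Z)) :
    ∀ (ℱ : DYμ) (GA GB : I ⥤ DX0μ)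
      (hGA : ∀ i, GA.obj i = (incl i).obj ((iXPull i).obj ((fPush i).obj ((proj i).obj ℱ))))
      (hGB : ∀ i, GB.obj i = (incl i).obj ((f0Push i).obj ((iYPull i).obj ((proj i).obj ℱ))))
      (β : GA ⟶ GB),
      (∀ i, β.app i =
        eqToHom (hGA i) ≫ (incl i).map ((bc i).app ((proj i).obj ℱ)) ≫ eqToHom (hGB i).symm) →
      IsIso (colimMap β) := by
  intro ℱ GA GB hGA hGB β hβ
  have : ∀ i, IsIso (β.app i) := by
    intro i
    rw [hβ i]
    have := proper_base_change i ((proj i).obj ℱ)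
    infer_instance
  have : IsIso β := NatIso.isIso_of_isIso_app β
  exact inferInstanceAs (IsIso (colim.map β))
end

section
/- The specialization construction for a recollement: let 𝒟 be the recollement of 𝒟₀ and 𝒟₁ such that L₀ ∘ i₁ : 𝒟₁ → 𝒟₀ admits a left adjoint U : 𝒟₀ → 𝒟₁. Then there is a functor sp_𝒟 : 𝒟 → Fun(Δ¹, 𝒟₁) determined by the pair of functors (U ∘ L₀, L₁) and the natural transformation U ∘ L₀ → L₁ that corresponds, under the adjunction U ⊣ (L₀ ∘ i₁), to the transformation L₀ → L₀ ∘ i₁ ∘ L₁ induced by the unit id → i₁ ∘ L₁. Moreover Fun(Δ¹, 𝒟₁) is itself the recollement of 𝒟₁ and 𝒟₁ determined by the identity adjunction, and sp_𝒟 is the functor glued via the universal property of that recollement. -/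
/-!
The arrow category `Arrow D₁` is a recollement of `D₁` with itself: `ev₀ ⊣ (d ↦ (d → ⊤))` and
`ev₁ ⊣ (d ↦ (d = d))`, both evaluations being left exact since limits of arrows are computed
pointwise. A natural transformation `F ⟶ G` between functors `D ⥤ D₁` is the same as a
functor `D ⥤ Arrow D₁` with left part `F` and right part `G`, so the specialization functor
is the natural transformation `U ∘ L₀ ⟶ L₁` adjoint, under the whiskered adjunction
`U ∘ - ⊣ L₀ ∘ i₁ ∘ -`, to `L₀` applied to the unit `id ⟶ i₁ ∘ L₁`.
-/

open CategoryTheory CategoryTheory.Limits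

namespace CategoryTheory

section Limits

variable {A B T J : Type*} [Category A] [Category B] [Category T] [Category J]
  {L : A ⥤ T} {R : B ⥤ T}

instance Comma.preservesLimitsOfShape_fst [HasLimitsOfShape J A] [HasLimitsOfShape J B]
    [PreservesLimitsOfShape J R] : PreservesLimitsOfShape J (Comma.fst L R) where
  preservesLimit :=
    preservesLimit_of_preserves_limit_cone
      (Comma.coneOfPreservesIsLimit _ (limit.isLimit _) (limit.isLimit _)) (limit.isLimit _)

instance Comma.preservesLimitsOfShape_snd [HasLimitsOfShape J A] [HasLimitsOfShape J B]
    [PreservesLimitsOfShape J R] : PreservesLimitsOfShape J (Comma.snd L R) where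
  preservesLimit :=
    preservesLimit_of_preserves_limit_cone
      (Comma.coneOfPreservesIsLimit _ (limit.isLimit _) (limit.isLimit _)) (limit.isLimit _)

instance Arrow.preservesFiniteLimits_leftFunc [HasFiniteLimits T] :
    PreservesFiniteLimits (Arrow.leftFunc : Arrow T ⥤ T) where
  preservesFiniteLimits _ := Comma.preservesLimitsOfShape_fst

instance Arrow.preservesFiniteLimits_rightFunc [HasFiniteLimits T] :
    PreservesFiniteLimits (Arrow.rightFunc : Arrow T ⥤ T) where
  preservesFiniteLimits _ := Comma.preservesLimitsOfShape_snd

end Limits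

namespace Arrow

variable {T : Type*} [Category T]

def toTerminalFunctor {t : T} (ht : IsTerminal t) : T ⥤ Arrow T where
  obj d := Arrow.mk (ht.from d)
  map f := Arrow.homMk f (𝟙 t) (ht.hom_ext _ _)

def idFunctor : T ⥤ Arrow T where
  obj d := Arrow.mk (𝟙 d)
  map f := Arrow.homMk f f (by simp)

def fullyFaithfulToTerminalFunctor {t : T} (ht : IsTerminal t) :
    (toTerminalFunctor ht).FullyFaithful where
  preimage g := g.left
  map_preimage _ := Arrow.hom_ext _ _ rfl (ht.hom_ext _ _)

def fullyFaithfulIdFunctor : (idFunctor : T ⥤ Arrow T).FullyFaithful where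
  preimage g := g.left
  map_preimage g :=
    Arrow.hom_ext _ _ rfl ((Category.comp_id _).symm.trans (g.w.trans (Category.id_comp _)))

def leftFuncAdjToTerminalFunctor {t : T} (ht : IsTerminal t) :
    Arrow.leftFunc ⊣ toTerminalFunctor ht :=
  Adjunction.mkOfHomEquiv
    { homEquiv X d :=
        { toFun f := Arrow.homMk f (ht.from X.right) (ht.hom_ext _ _)
          invFun g := g.left
          left_inv _ := rfl
          right_inv _ := Arrow.hom_ext _ _ rfl (ht.hom_ext _ _) }
      homEquiv_naturality_right _ _ := Arrow.hom_ext _ _ rfl (ht.hom_ext _ _) }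

def rightFuncAdjIdFunctor : (Arrow.rightFunc : Arrow T ⥤ T) ⊣ idFunctor :=
  Adjunction.mkOfHomEquiv
    { homEquiv X d :=
        { toFun g := Arrow.homMk (X.hom ≫ g) g (Category.comp_id _)
          invFun h := h.right
          left_inv _ := rfl
          right_inv h := Arrow.hom_ext _ _ (h.w.symm.trans (Category.comp_id _)) rfl }
      homEquiv_naturality_right _ _ := Arrow.hom_ext _ _ (Category.assoc _ _ _).symm rfl }

noncomputable def recollement [HasFiniteLimits T] {t : T} (ht : IsTerminal t) :
    Recollement (Arrow T) T T where
  hasFiniteLimits := inferInstance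
  i₀ := toTerminalFunctor ht
  i₁ := idFunctor
  i₀_full := (fullyFaithfulToTerminalFunctor ht).full
  i₀_faithful := (fullyFaithfulToTerminalFunctor ht).faithful
  i₁_full := fullyFaithfulIdFunctor.full
  i₁_faithful := fullyFaithfulIdFunctor.faithful
  L₀ := Arrow.leftFunc
  L₁ := Arrow.rightFunc
  adj₀ := leftFuncAdjToTerminalFunctor ht
  adj₁ := rightFuncAdjIdFunctor
  L₀_leftExact := inferInstance
  L₁_leftExact := inferInstance
  term := t
  term_isTerminal := ht
  L₁_comp_i₀ := NatIso.ofComponents (fun _ => Iso.refl _) (fun _ => ht.hom_ext _ _)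
  jointly_conservative f h₀ h₁ :=
    have : IsIso f.left := h₀
    have : IsIso f.right := h₁
    isIso_of_isIso_left_of_isIso_right f

end Arrow

variable {C D : Type*} [Category C] [Category D]

def NatTrans.arrowFunctor {F G : C ⥤ D} (α : F ⟶ G) : C ⥤ Arrow D where
  obj x := Arrow.mk (α.app x)
  map f := Arrow.homMk (F.map f) (G.map f) (α.naturality f)

lemma Adjunction.whiskerRight_homEquiv_symm_app {U : C ⥤ D} {V : D ⥤ C} (adj : U ⊣ V)
    {E : Type*} [Category E] {F : E ⥤ C} {G : E ⥤ D} (β : F ⟶ G ⋙ V) (x : E) :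
    (((adj.whiskerRight E).homEquiv F G).symm β).app x = (adj.homEquiv _ _).symm (β.app x) := by
  rw [Adjunction.homEquiv_counit, Adjunction.homEquiv_counit]
  simp [Adjunction.whiskerRight]

end CategoryTheory

namespace Recollement

variable {D D₀ D₁ : Type*} [Category D] [Category D₀] [Category D₁]

lemma hasFiniteLimits_right (R : Recollement D D₀ D₁) : HasFiniteLimits D₁ :=
  have := R.hasFiniteLimits
  have := R.i₁_full
  have := R.i₁_faithful
  have : Reflective R.i₁ := ⟨R.L₁, R.adj₁⟩
  ⟨fun _ _ _ => hasLimitsOfShape_of_reflective R.i₁⟩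

variable (R : Recollement D D₀ D₁) {U : D₀ ⥤ D₁} (adjU : U ⊣ R.i₁ ⋙ R.L₀)

def specializationTrans : R.L₀ ⋙ U ⟶ R.L₁ :=
  ((adjU.whiskerRight D).homEquiv R.L₀ R.L₁).symm (Functor.whiskerRight R.adj₁.unit R.L₀)

lemma homEquiv_specializationTrans_app (x : D) :
    adjU.homEquiv _ _ ((R.specializationTrans adjU).app x) = R.L₀.map (R.adj₁.unit.app x) := by
  rw [specializationTrans, Adjunction.whiskerRight_homEquiv_symm_app, Equiv.apply_symm_apply]
  rfl

def specialization : D ⥤ Arrow D₁ := (R.specializationTrans adjU).arrowFunctor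

end Recollement

/-- The specialization functor of a recollement whose gluing functor admits a left
adjoint. -/
theorem recollement_specialization_functor
    {D D₀ D₁ : Type*} [Category D] [Category D₀] [Category D₁]
    (R : Recollement D D₀ D₁)
    (U : D₀ ⥤ D₁) (adjU : U ⊣ R.i₁ ⋙ R.L₀) :
    -- Fun(Δ¹, 𝒟₁) is the recollement of 𝒟₁ and 𝒟₁ with localizations ev₀ and ev₁
    (∃ R' : Recollement (Arrow D₁) D₁ D₁,
      R'.L₀ = Arrow.leftFunc ∧ R'.L₁ = Arrow.rightFunc) ∧
    -- the specialization functor sp : 𝒟 → Fun(Δ¹, 𝒟₁)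
    (∃ sp : D ⥤ Arrow D₁,
      Nonempty (sp ⋙ Arrow.leftFunc ≅ R.L₀ ⋙ U) ∧
      Nonempty (sp ⋙ Arrow.rightFunc ≅ R.L₁) ∧
      -- the arrow component of sp corresponds under U ⊣ L₀ ∘ i₁ to
      -- L₀ → L₀ ∘ i₁ ∘ L₁ induced by the unit id → i₁ ∘ L₁
      ∀ x : D, ∃ (hl : (sp.obj x).left = U.obj (R.L₀.obj x))
        (hr : (sp.obj x).right = R.L₁.obj x),
        (adjU.homEquiv (R.L₀.obj x) (R.L₁.obj x))
            (eqToHom hl.symm ≫ (sp.obj x).hom ≫ eqToHom hr) =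
          R.L₀.map (R.adj₁.unit.app x)) := by
  have := R.hasFiniteLimits_right
  refine ⟨⟨Arrow.recollement R.term_isTerminal, rfl, rfl⟩,
    R.specialization adjU, ⟨Iso.refl _⟩, ⟨Iso.refl _⟩, fun x => ⟨rfl, rfl, ?_⟩⟩
  show adjU.homEquiv _ _ (𝟙 _ ≫ (R.specializationTrans adjU).app x ≫ 𝟙 _) = _
  rw [Category.id_comp, Category.comp_id]
  exact R.homEquiv_specializationTrans_app adjU x
end
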